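/- arXiv:2512.01730 — 2 statements merged into one kernel-verified Lean document; each statement's English description precedes it below -/
import Mathlib

section
/- For n ≥ 1 and r > 0, define K_n(r) = r^{n-1}/2 if r ≤ 1 and K_n(r) = r^{-n-1}/2 if r > 1. Then (1/(2π))·∫_{-π}^{π} sin(β)·sin(nβ)/(1 + r^2 - 2r·cos(β)) dβ = K_n(r) for every r > 0 with r ≠ 1. -/
open Real MeasureTheory intervalIntegral

lemma cosint (c : ℤ) (hc : c ≠ 0) : ∫ x in (-π)..π, Real.cos (c * x) = 0 := by
  have hc' : (c:ℝ) ≠ 0 := Int.cast_ne_zero.mpr hc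
  rw [intervalIntegral.integral_comp_mul_left (fun x => Real.cos x) hc']
  simp [integral_cos, mul_comm π (c:ℝ), Real.sin_int_mul_pi]

lemma coscont (c : ℝ) : IntervalIntegrable (fun x => Real.cos (c * x)) volume (-π) π := by
  apply Continuous.intervalIntegrable; continuity

lemma sinorth (a b : ℕ) (ha : 1 ≤ a) (hb : 1 ≤ b) :
    ∫ x in (-π)..π, Real.sin (a * x) * Real.sin (b * x)
      = if a = b then π else 0 := by
  have key : ∀ x : ℝ, Real.sin (a * x) * Real.sin (b * x)
      = (Real.cos (((a - b : ℤ) : ℝ) * x) - Real.cos (((a + b : ℤ) : ℝ) * x)) / 2 := by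
    intro x
    have h := Real.cos_sub_cos (((a - b : ℤ) : ℝ) * x) (((a + b : ℤ) : ℝ) * x)
    rw [h, show ((((a - b : ℤ) : ℝ)) * x + (((a + b : ℤ) : ℝ)) * x)/2 = (a:ℝ)*x by push_cast; ring,
      show ((((a - b : ℤ) : ℝ)) * x - (((a + b : ℤ) : ℝ)) * x)/2 = -((b:ℝ)*x) by push_cast; ring,
      Real.sin_neg]
    ring
  simp_rw [key]
  rw [intervalIntegral.integral_div, intervalIntegral.integral_sub (coscont _) (coscont _)]
  by_cases hab : a = b
  · subst hab
    have h1 : ((a:ℤ) - a : ℤ) = 0 := by ring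
    rw [h1, cosint ((a:ℤ)+a) (by positivity), if_pos rfl]
    simp
  · have h2 : ((a:ℤ) - b : ℤ) ≠ 0 := sub_ne_zero.mpr (fun h => hab (by exact_mod_cast h))
    rw [cosint _ h2, cosint ((a:ℤ)+b) (by positivity), if_neg hab]
    ring

lemma Dpos' (r : ℝ) (hr0 : 0 ≤ r) (hr : r < 1) (β : ℝ) :
    0 < 1 + r ^ 2 - 2 * r * Real.cos β := by
  nlinarith [Real.cos_le_one β, sq_nonneg (1 - r)]

lemma series_id (r : ℝ) (hr0 : 0 ≤ r) (hr : r < 1) (β : ℝ) :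
    ∑' k : ℕ, r ^ k * Real.sin ((k + 1) * β)
      = Real.sin β / (1 + r ^ 2 - 2 * r * Real.cos β) := by
  set z : ℂ := (r : ℂ) * Complex.exp (β * Complex.I) with hz
  have hnz : ‖z‖ < 1 := by
    simp only [hz, norm_mul, Complex.norm_real, map_mul, Real.norm_eq_abs,
      Complex.norm_exp_ofReal_mul_I, abs_of_nonneg hr0, mul_one]
    exact hr
  have hgeo : ∑' k : ℕ, z ^ k = (1 - z)⁻¹ := tsum_geometric_of_norm_lt_one hnz
  have hterm : ∀ k : ℕ, r ^ k * Real.sin ((k + 1) * β)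
      = ((z ^ k * Complex.exp (β * Complex.I)).im) := by
    intro k
    have h1 : z ^ k * Complex.exp (β * Complex.I)
        = ((r ^ k : ℝ) : ℂ) * Complex.exp ((((k:ℝ)+1) * β : ℝ) * Complex.I) := by
      rw [hz, mul_pow, ← Complex.exp_nat_mul, mul_assoc, ← Complex.exp_add]
      push_cast
      ring_nf
    rw [h1, Complex.im_ofReal_mul, Complex.exp_ofReal_mul_I_im]
  have hsum : Summable (fun k : ℕ => z ^ k * Complex.exp (β * Complex.I)) :=
    (summable_geometric_of_norm_lt_one hnz).mul_right _
  have hQ : (1 - r * Real.cos β) * (1 - r * Real.cos β) + r * Real.sin β * (r * Real.sin β)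
      = 1 + r ^ 2 - 2 * r * Real.cos β := by
    nlinarith [Real.sin_sq_add_cos_sq β]
  have hD := Dpos' r hr0 hr β
  calc ∑' k : ℕ, r ^ k * Real.sin ((k + 1) * β)
      = ∑' k : ℕ, ((z ^ k * Complex.exp (β * Complex.I)).im) := by simp_rw [hterm]
    _ = (∑' k : ℕ, z ^ k * Complex.exp (β * Complex.I)).im := by
        exact (Complex.imCLM.map_tsum hsum).symm
    _ = ((1 - z)⁻¹ * Complex.exp (β * Complex.I)).im := by rw [tsum_mul_right, hgeo]
    _ = Real.sin β / (1 + r ^ 2 - 2 * r * Real.cos β) := by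
        rw [inv_mul_eq_div, Complex.div_im]
        simp only [hz, Complex.exp_mul_I, Complex.sub_re, Complex.sub_im, Complex.one_re,
          Complex.one_im, Complex.mul_re, Complex.mul_im, Complex.ofReal_re, Complex.ofReal_im,
          Complex.add_re, Complex.add_im, Complex.I_re, Complex.I_im,
          Complex.sin_ofReal_re, Complex.sin_ofReal_im, Complex.cos_ofReal_re,
          Complex.cos_ofReal_im, Complex.normSq_apply]
        ring_nf
        have h2 : 1 + Real.sin β ^ 2 * r ^ 2 - r * Real.cos β * 2 + r ^ 2 * Real.cos β ^ 2
            = 1 - r * Real.cos β * 2 + r ^ 2 := by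
          linear_combination r ^ 2 * Real.sin_sq_add_cos_sq β
        rw [h2]

lemma main_int (n : ℕ) (hn : 1 ≤ n) (r : ℝ) (hr0 : 0 ≤ r) (hr : r < 1) :
    ∫ β in (-π)..π, Real.sin β * Real.sin (n * β) / (1 + r ^ 2 - 2 * r * Real.cos β)
      = π * r ^ (n - 1) := by
  have hpi : (-π : ℝ) ≤ π := by linarith [Real.pi_pos]
  set g : ℕ → ℝ → ℝ := fun k β => r ^ k * Real.sin ((k + 1) * β) * Real.sin (n * β) with hg
  have hgc : ∀ k, Continuous (g k) := by
    intro k; apply Continuous.mul; apply Continuous.mul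
    · exact continuous_const
    · exact Real.continuous_sin.comp (continuous_const.mul continuous_id)
    · exact Real.continuous_sin.comp (continuous_const.mul continuous_id)
  have hpt : ∀ β : ℝ, Real.sin β * Real.sin (n * β) / (1 + r ^ 2 - 2 * r * Real.cos β)
      = ∑' k : ℕ, g k β := by
    intro β
    rw [hg]
    simp only []
    rw [tsum_mul_right, series_id r hr0 hr β]
    ring
  have hint : ∀ k, IntegrableOn (g k) (Set.Ioc (-π) π) volume :=
    fun k => (hgc k).integrableOn_Ioc
  have hbound : ∀ k, (∫ β in Set.Ioc (-π) π, ‖g k β‖) ≤ (2 * π) * r ^ k := by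
    intro k
    have h1 : ∀ β ∈ Set.Ioc (-π) π, ‖g k β‖ ≤ r ^ k := by
      intro β _
      rw [hg]
      simp only [norm_mul, Real.norm_eq_abs, abs_pow, abs_of_nonneg hr0]
      calc r ^ k * |Real.sin ((k+1)*β)| * |Real.sin (n*β)|
          ≤ r ^ k * 1 * 1 := by
            apply mul_le_mul (mul_le_mul le_rfl (Real.abs_sin_le_one _) (abs_nonneg _)
              (by positivity)) (Real.abs_sin_le_one _) (abs_nonneg _) (by positivity)
        _ = r ^ k := by ring
    calc (∫ β in Set.Ioc (-π) π, ‖g k β‖)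
        ≤ ∫ _ in Set.Ioc (-π) π, r ^ k := by
          apply setIntegral_mono_on (hint k).norm ((integrableOn_const_iff).mpr (Or.inr (by
            rw [Real.volume_Ioc]; exact ENNReal.ofReal_lt_top))) measurableSet_Ioc h1
      _ = (2 * π) * r ^ k := by
          rw [setIntegral_const, Real.volume_real_Ioc_of_le hpi, smul_eq_mul]
          ring_nf
  have hsum : Summable fun k => ∫ β in Set.Ioc (-π) π, ‖g k β‖ := by
    apply Summable.of_nonneg_of_le (fun k => integral_nonneg fun β => norm_nonneg _) hbound
    exact (summable_geometric_of_lt_one hr0 hr).mul_left _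
  have hswap := MeasureTheory.integral_tsum_of_summable_integral_norm
    (μ := volume.restrict (Set.Ioc (-π) π)) hint hsum
  rw [intervalIntegral.integral_of_le hpi]
  calc (∫ β in Set.Ioc (-π) π, Real.sin β * Real.sin (n * β) / (1 + r ^ 2 - 2 * r * Real.cos β))
      = ∫ β in Set.Ioc (-π) π, ∑' k, g k β := by
        apply setIntegral_congr_fun measurableSet_Ioc
        intro β _; exact hpt β
    _ = ∑' k, ∫ β in Set.Ioc (-π) π, g k β := hswap.symm
    _ = ∑' k : ℕ, r ^ k * (if k + 1 = n then π else 0) := by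
        congr 1; funext k
        rw [← intervalIntegral.integral_of_le hpi]
        have : ∀ β, g k β = r ^ k * (Real.sin (((k+1 : ℕ) : ℝ) * β) * Real.sin ((n:ℝ) * β)) := by
          intro β; rw [hg]; push_cast; ring
        simp_rw [this]
        rw [intervalIntegral.integral_const_mul, sinorth (k+1) n (Nat.le_add_left 1 k) hn]
    _ = π * r ^ (n - 1) := by
        rw [tsum_eq_single (n - 1)]
        · rw [if_pos (by omega)]; ring
        · intro k hk
          rw [if_neg (by omega), mul_zero]

noncomputable def Kker (n : ℕ) (r : ℝ) : ℝ :=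
  if r ≤ 1 then r ^ (n - 1) / 2 else r ^ (-(n:ℤ) - 1) / 2

theorem biot_savart_kernel (n : ℕ) (hn : 1 ≤ n) (r : ℝ) (hr : 0 < r) (hr1 : r ≠ 1) :
    (1 / (2 * π)) *
        ∫ β in (-π)..π, Real.sin β * Real.sin (n * β) / (1 + r ^ 2 - 2 * r * Real.cos β)
      = Kker n r := by
  have hpi := Real.pi_pos
  rcases lt_or_gt_of_ne hr1 with h | h
  · rw [main_int n hn r hr.le h, Kker, if_pos h.le]
    field_simp
  · have hs0 : (0:ℝ) ≤ 1 / r := by positivity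
    have hs1 : 1 / r < 1 := by rw [div_lt_one hr]; exact h
    have hD : ∀ β : ℝ, (1 + (1/r) ^ 2 - 2 * (1/r) * Real.cos β) = (1 + r^2 - 2*r*Real.cos β) / r^2 := by
      intro β; field_simp; ring
    have hpt : ∀ β : ℝ, Real.sin β * Real.sin (n * β) / (1 + r ^ 2 - 2 * r * Real.cos β)
        = (1/r)^2 * (Real.sin β * Real.sin (n * β) / (1 + (1/r) ^ 2 - 2 * (1/r) * Real.cos β)) := by
      intro β
      rw [hD β]
      rw [div_div_eq_mul_div, div_pow, one_pow]
      field_simp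
    have hcalc : (∫ β in (-π)..π, Real.sin β * Real.sin (n * β) / (1 + r ^ 2 - 2 * r * Real.cos β))
        = (1/r)^2 * ∫ β in (-π)..π,
            Real.sin β * Real.sin (n * β) / (1 + (1/r) ^ 2 - 2 * (1/r) * Real.cos β) := by
      rw [← intervalIntegral.integral_const_mul]
      exact intervalIntegral.integral_congr fun β _ => hpt β
    rw [hcalc, main_int n hn (1/r) hs0 hs1, Kker, if_neg (not_le.mpr h)]
    have hrn : r ^ (-(n:ℤ) - 1) = (1/r) ^ (n + 1) := by
      rw [zpow_sub₀ (ne_of_gt hr), zpow_neg, zpow_natCast, zpow_one, div_pow, one_pow, pow_succ]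
      field_simp
    rw [hrn]
    have hn1 : n - 1 + 2 = n + 1 := by omega
    have : (1/r)^2 * (π * (1/r) ^ (n-1)) = π * (1/r)^(n+1) := by
      rw [← hn1, pow_add]; ring
    rw [this]
    field_simp
end

section
/- Suppose Ψ : (0,1] → ℝ is continuous with Ψ(x) ≥ 0 for all x ∈ (0,1], n ≥ 1, A > 0, and f : (0,1] → ℝ is continuous satisfying the Volterra integral equation f(x) = A·x^n + (1/(2n))·∫₀^x (Ψ(s)/s)·f(s)·[(x/s)^n − (s/x)^n] ds for all x ∈ (0,1] (the integral being absolutely convergent). Then f(x) > 0 for all x ∈ (0,1]. -/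
open MeasureTheory

lemma kernel_nonneg' (n : ℕ) {s x : ℝ} (hs : 0 < s) (hsx : s ≤ x) :
    0 ≤ (x / s) ^ n - (s / x) ^ n := by
  have hx : 0 < x := hs.trans_le hsx
  have h1 : s / x ≤ 1 := div_le_one_of_le₀ hsx hx.le
  have h2 : 1 ≤ x / s := (one_le_div hs).2 hsx
  have h3 : (s / x) ^ n ≤ (x / s) ^ n :=
    pow_le_pow_left₀ (div_nonneg hs.le hx.le) (h1.trans h2) n
  linarith

lemma kernel_le' (n : ℕ) {s y : ℝ} (hs : 0 < s) (hy : 0 < y) (hy1 : y ≤ 1) :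
    (y / s) ^ n - (s / y) ^ n ≤ y ^ n * ((1 / s) ^ n - (s / 1) ^ n) := by
  have hmul : y * s ≤ s / y := by
    rw [le_div_iff₀ hy]
    nlinarith [mul_le_mul_of_nonneg_left (show y*y ≤ 1 by nlinarith) hs.le]
  have key : (y * s) ^ n ≤ (s / y) ^ n :=
    pow_le_pow_left₀ (by positivity) hmul n
  have e1 : (y / s) ^ n = y ^ n * (1 / s) ^ n := by
    rw [div_eq_mul_inv, mul_pow, one_div, inv_pow]
  have e2 : (y * s) ^ n = y ^ n * (s / 1) ^ n := by
    rw [div_one, mul_pow]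
  nlinarith [key, e1, e2]

theorem positivity_bootstrap (Ψ f : ℝ → ℝ) (n : ℕ) (hn : 1 ≤ n) (A : ℝ) (hA : 0 < A)
    (hΨc : ContinuousOn Ψ (Set.Ioc 0 1)) (hΨ : ∀ x ∈ Set.Ioc (0:ℝ) 1, 0 ≤ Ψ x)
    (hf : ContinuousOn f (Set.Ioc 0 1))
    (hint : ∀ x ∈ Set.Ioc (0:ℝ) 1,
      IntervalIntegrable
        (fun s => Ψ s / s * f s * ((x / s) ^ n - (s / x) ^ n)) volume 0 x)
    (heq : ∀ x ∈ Set.Ioc (0:ℝ) 1,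
      f x = A * x ^ n +
        (1 / (2 * n)) * ∫ s in (0:ℝ)..x, Ψ s / s * f s * ((x / s) ^ n - (s / x) ^ n)) :
    ∀ x ∈ Set.Ioc (0:ℝ) 1, 0 < f x := by
  have hn' : (1 : ℝ) ≤ (n : ℝ) := by exact_mod_cast hn
  have hn0 : (0 : ℝ) < (n : ℝ) := by linarith
  -- the dominating function
  set g : ℝ → ℝ := fun s => |Ψ s / s * f s * ((1 / s) ^ n - (s / 1) ^ n)| with hg_def
  have hg_nonneg : ∀ s, 0 ≤ g s := fun s => abs_nonneg _
  have hg_int : IntervalIntegrable g volume 0 1 :=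
    (hint 1 ⟨one_pos, le_refl 1⟩).abs
  have hg_intOn : IntegrableOn g (Set.Ioc (0:ℝ) 1) volume := by
    rw [intervalIntegrable_iff_integrableOn_Ioc_of_le zero_le_one] at hg_int
    exact hg_int
  -- choose δ with small tail
  obtain ⟨δ, hδ0, hδ1, hδ⟩ :
      ∃ δ : ℝ, 0 < δ ∧ δ ≤ 1 ∧ (∫ s in Set.Ioc (0:ℝ) δ, g s) ≤ (n : ℝ) * A := by
    have h_anti : Antitone (fun k : ℕ => Set.Ioc (0:ℝ) (1 / (k + 1))) := by
      intro i j hij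
      apply Set.Ioc_subset_Ioc_right
      apply one_div_le_one_div_of_le (by positivity)
      have : (i : ℝ) ≤ j := by exact_mod_cast hij
      linarith
    have hInter : (⋂ k : ℕ, Set.Ioc (0:ℝ) (1 / (k + 1))) = ∅ := by
      rw [Set.eq_empty_iff_forall_notMem]
      intro x hx
      obtain ⟨k, hk⟩ := exists_nat_gt (1 / x)
      have hx0 : 0 < x := (Set.mem_iInter.1 hx 0).1
      have hxk : x ≤ 1 / (k + 1) := (Set.mem_iInter.1 hx k).2
      have h1 : 1 / x < (k : ℝ) + 1 := by linarith
      have h2 : 1 / ((k : ℝ) + 1) < x := by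
        rw [div_lt_iff₀ (by positivity)]
        rw [div_lt_iff₀ hx0] at h1
        linarith
      linarith
    have htend := tendsto_setIntegral_of_antitone (μ := volume) (f := g)
      (fun k : ℕ => measurableSet_Ioc) h_anti
      ⟨0, by simpa using hg_intOn.mono_set (Set.Ioc_subset_Ioc_right (by norm_num))⟩
    rw [hInter] at htend
    simp only [MeasureTheory.setIntegral_empty] at htend
    have hev : ∀ᶠ k : ℕ in Filter.atTop,
        (∫ s in Set.Ioc (0:ℝ) (1 / (k + 1)), g s) < (n : ℝ) * A := by
      have := htend.eventually (eventually_lt_nhds (by positivity : (0:ℝ) < (n:ℝ) * A))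
      simpa using this
    obtain ⟨k, hk⟩ := hev.exists
    refine ⟨1 / (k + 1), by positivity, ?_, hk.le⟩
    rw [div_le_one (by positivity)]
    linarith [Nat.cast_nonneg (α := ℝ) k]
  -- positivity near zero
  have hsmall : ∀ y ∈ Set.Ioc (0:ℝ) δ, 0 < f y := by
    intro y hy
    have hy0 : 0 < y := hy.1
    have hy1 : y ≤ 1 := hy.2.trans hδ1
    have hyI : y ∈ Set.Ioc (0:ℝ) 1 := ⟨hy0, hy1⟩
    set Fy : ℝ → ℝ := fun s => Ψ s / s * f s * ((y / s) ^ n - (s / y) ^ n) with hFy_def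
    have hintFy : IntervalIntegrable Fy volume 0 y := hint y hyI
    have hgy_int : IntervalIntegrable g volume 0 y :=
      hg_int.mono_set (by
        rw [Set.uIcc_of_le hy0.le, Set.uIcc_of_le zero_le_one]
        exact Set.Icc_subset_Icc_right hy1)
    -- pointwise bound
    have hpt : ∀ s ∈ Set.Icc (0:ℝ) y, |Fy s| ≤ y ^ n * g s := by
      intro s hs
      rcases eq_or_lt_of_le hs.1 with h0 | h0
      · simp only [hFy_def, hg_def, ← h0]
        rw [div_zero, zero_mul, zero_mul, abs_zero]
        positivity
      · have hK1 : 0 ≤ (1 / s) ^ n - (s / 1) ^ n := by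
          have := kernel_nonneg' n h0 (le_trans hs.2 hy1)
          simpa using this
        have hKy : 0 ≤ (y / s) ^ n - (s / y) ^ n := kernel_nonneg' n h0 hs.2
        have hKle : (y / s) ^ n - (s / y) ^ n ≤ y ^ n * ((1 / s) ^ n - (s / 1) ^ n) :=
          kernel_le' n h0 hy0 hy1
        have : |Fy s| = |Ψ s / s * f s| * ((y / s) ^ n - (s / y) ^ n) := by
          rw [hFy_def, abs_mul, abs_of_nonneg hKy]
        rw [this, hg_def]
        calc |Ψ s / s * f s| * ((y / s) ^ n - (s / y) ^ n)
            ≤ |Ψ s / s * f s| * (y ^ n * ((1 / s) ^ n - (s / 1) ^ n)) :=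
              mul_le_mul_of_nonneg_left hKle (abs_nonneg _)
          _ = y ^ n * (|Ψ s / s * f s| * ((1 / s) ^ n - (s / 1) ^ n)) := by ring
          _ = y ^ n * |Ψ s / s * f s * ((1 / s) ^ n - (s / 1) ^ n)| := by
              rw [abs_mul _ ((1 / s) ^ n - (s / 1) ^ n), abs_of_nonneg hK1]
    -- bound the integral
    have habs : |∫ s in (0:ℝ)..y, Fy s| ≤ ∫ s in (0:ℝ)..y, |Fy s| :=
      intervalIntegral.abs_integral_le_integral_abs hy0.le
    have hmono : (∫ s in (0:ℝ)..y, |Fy s|) ≤ ∫ s in (0:ℝ)..y, y ^ n * g s :=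
      intervalIntegral.integral_mono_on hy0.le hintFy.abs (hgy_int.const_mul _) hpt
    have hconst : (∫ s in (0:ℝ)..y, y ^ n * g s) = y ^ n * ∫ s in (0:ℝ)..y, g s :=
      intervalIntegral.integral_const_mul _ _
    have hJy : (∫ s in (0:ℝ)..y, g s) ≤ ∫ s in Set.Ioc (0:ℝ) δ, g s := by
      rw [intervalIntegral.integral_of_le hy0.le]
      refine setIntegral_mono_set ?_ ?_ ?_
      · exact hg_intOn.mono_set (Set.Ioc_subset_Ioc_right hδ1)
      · exact Filter.Eventually.of_forall hg_nonneg
      · exact (Set.Ioc_subset_Ioc_right hy.2).eventuallyLE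
    have hIlb : -(y ^ n * ((n : ℝ) * A)) ≤ ∫ s in (0:ℝ)..y, Fy s := by
      have h1 : |∫ s in (0:ℝ)..y, Fy s| ≤ y ^ n * ((n : ℝ) * A) := by
        calc |∫ s in (0:ℝ)..y, Fy s| ≤ ∫ s in (0:ℝ)..y, |Fy s| := habs
          _ ≤ y ^ n * ∫ s in (0:ℝ)..y, g s := by rw [← hconst]; exact hmono
          _ ≤ y ^ n * ((n : ℝ) * A) := by
              apply mul_le_mul_of_nonneg_left (hJy.trans hδ) (by positivity)
      linarith [neg_abs_le (∫ s in (0:ℝ)..y, Fy s)]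
    have heqy := heq y hyI
    rw [heqy]
    have hc : (0:ℝ) < 1 / (2 * (n:ℝ)) := by positivity
    have hbound : (1 / (2 * (n:ℝ))) * ∫ s in (0:ℝ)..y, Fy s
        ≥ -(y ^ n * A / 2) := by
      have h2 : (1 / (2 * (n:ℝ))) * (-(y ^ n * ((n : ℝ) * A)))
          = -(y ^ n * A / 2) := by
        field_simp
      calc (1 / (2 * (n:ℝ))) * ∫ s in (0:ℝ)..y, Fy s
          ≥ (1 / (2 * (n:ℝ))) * (-(y ^ n * ((n : ℝ) * A))) :=
            mul_le_mul_of_nonneg_left hIlb hc.le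
        _ = -(y ^ n * A / 2) := h2
    have hyp : 0 < y ^ n := pow_pos hy0 n
    nlinarith [hbound]
  -- bootstrap to all of (0,1]
  intro x hx
  by_contra hne
  push_neg at hne
  have hxδ : δ < x := by
    by_contra hle
    push_neg at hle
    exact absurd (hsmall x ⟨hx.1, hle⟩) (not_lt.2 hne)
  -- the set where f ≤ 0 inside [δ, 1]
  set T : Set ℝ := {z ∈ Set.Icc δ 1 | f z ≤ 0} with hT_def
  have hTne : T.Nonempty := ⟨x, ⟨⟨hxδ.le, hx.2⟩, hne⟩⟩
  have hfc : ContinuousOn f (Set.Icc δ 1) :=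
    hf.mono (fun z hz => ⟨lt_of_lt_of_le hδ0 hz.1, hz.2⟩)
  have hTclosed : IsClosed T := by
    have : T = Set.Icc δ 1 ∩ f ⁻¹' Set.Iic 0 := by
      ext z; simp [hT_def, Set.mem_sep_iff]
    rw [this]
    exact ContinuousOn.preimage_isClosed_of_isClosed hfc isClosed_Icc isClosed_Iic
  have hTbdd : BddBelow T := ⟨δ, fun z hz => hz.1.1⟩
  set c := sInf T with hc_def
  have hcT : c ∈ T := IsClosed.csInf_mem hTclosed hTne hTbdd
  have hcδ : δ ≤ c := hcT.1.1
  have hc1 : c ≤ 1 := hcT.1.2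
  have hc0 : 0 < c := lt_of_lt_of_le hδ0 hcδ
  have hfcpos : ∀ s, 0 < s → s < c → 0 < f s := by
    intro s hs0 hsc
    rcases le_or_gt s δ with h | h
    · exact hsmall s ⟨hs0, h⟩
    · by_contra hle
      push_neg at hle
      have hsT : s ∈ T := ⟨⟨h.le, hsc.le.trans hc1⟩, hle⟩
      exact absurd (csInf_le hTbdd hsT) (not_le.2 hsc)
  have hInonneg : 0 ≤ ∫ s in (0:ℝ)..c, Ψ s / s * f s * ((c / s) ^ n - (s / c) ^ n) := by
    apply intervalIntegral.integral_nonneg hc0.le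
    intro s hs
    rcases eq_or_lt_of_le hs.1 with h0 | h0
    · rw [← h0, div_zero, zero_mul, zero_mul]
    rcases eq_or_lt_of_le hs.2 with hc' | hc'
    · rw [hc', div_self (ne_of_gt hc0), sub_self, mul_zero]
    have hfs : 0 < f s := hfcpos s h0 hc'
    have hΨs : 0 ≤ Ψ s / s := div_nonneg (hΨ s ⟨h0, hs.2.trans hc1⟩) h0.le
    have hK : 0 ≤ (c / s) ^ n - (s / c) ^ n := kernel_nonneg' n h0 hs.2
    positivity
  have heqc := heq c ⟨hc0, hc1⟩
  have : 0 < f c := by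
    rw [heqc]
    have h1 : 0 < A * c ^ n := by positivity
    have h2 : 0 ≤ (1 / (2 * (n:ℝ))) * ∫ s in (0:ℝ)..c,
        Ψ s / s * f s * ((c / s) ^ n - (s / c) ^ n) := by positivity
    linarith
  exact absurd this (not_lt.2 hcT.2)
end
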